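/- Let (Ω, ℱ, ℙ) be a probability space and let 𝒢 and 𝒯 be independent sub-σ-algebras of ℱ. Let 𝒢₀ ⊆ 𝒢 and 𝒯₀ ⊆ 𝒯 be sub-σ-algebras, let Y be a 𝒢-measurable integrable random variable, and let Z be a 𝒯-measurable bounded random variable. Then E[YZ | 𝒢₀ ∨ 𝒯₀] = E[Y | 𝒢₀] · E[Z | 𝒯₀] almost surely. -/

import Mathlib

/-!
Both sides are integrable and `G₀ ⊔ T₀`-measurable, so it suffices to compare their integrals
over the π-system of rectangles `A ∩ B` with `A ∈ G₀`, `B ∈ T₀`, which generates `G₀ ⊔ T₀`.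
Since `A ∩ B` and both integrands split into a `G`-part and a `T`-part, independence turns
`∫_{A ∩ B} Y Z` into `(∫_A Y) (∫_B Z)` and `∫_{A ∩ B} E[Y | G₀] E[Z | T₀]` into
`(∫_A E[Y | G₀]) (∫_B E[Z | T₀])`, and these agree by the defining property of conditional
expectation.
-/

open MeasureTheory ProbabilityTheory

theorem IsPiSystem.image2_inter {α : Type*} {p₁ p₂ : Set (Set α)} (h₁ : IsPiSystem p₁)
    (h₂ : IsPiSystem p₂) : IsPiSystem (Set.image2 (· ∩ ·) p₁ p₂) := by
  rintro _ ⟨A, hA, B, hB, rfl⟩ _ ⟨A', hA', B', hB', rfl⟩ hne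
  rw [Set.inter_inter_inter_comm] at hne ⊢
  exact ⟨_, h₁ A hA A' hA' hne.left, _, h₂ B hB B' hB' hne.right, rfl⟩

theorem MeasurableSpace.generateFrom_image2_inter_measurableSet {α : Type*}
    (m₁ m₂ : MeasurableSpace α) :
    generateFrom (Set.image2 (· ∩ ·) {s | MeasurableSet[m₁] s} {t | MeasurableSet[m₂] t}) =
      m₁ ⊔ m₂ := by
  refine le_antisymm (generateFrom_le ?_) (sup_le (fun A hA => ?_) (fun B hB => ?_))
  · rintro _ ⟨A, hA, B, hB, rfl⟩
    exact (le_sup_left (b := m₂) _ hA).inter (le_sup_right (a := m₁) _ hB)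
  · exact measurableSet_generateFrom
      ⟨A, hA, Set.univ, @MeasurableSet.univ _ m₂, Set.inter_univ A⟩
  · exact measurableSet_generateFrom
      ⟨Set.univ, @MeasurableSet.univ _ m₁, B, hB, Set.univ_inter B⟩

theorem setIntegral_eq_setIntegral_of_isPiSystem_of_univ_mem {α : Type*}
    {m m₀ : MeasurableSpace α} {μ : Measure α} (hm : m ≤ m₀) {s : Set (Set α)}
    (h_eq : m = MeasurableSpace.generateFrom s) (h_inter : IsPiSystem s) (h_univ : Set.univ ∈ s)
    {f g : α → ℝ} (hf : Integrable f μ) (hg : Integrable g μ)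
    (basic : ∀ t ∈ s, ∫ x in t, f x ∂μ = ∫ x in t, g x ∂μ) {t : Set α}
    (ht : MeasurableSet[m] t) : ∫ x in t, f x ∂μ = ∫ x in t, g x ∂μ := by
  induction t, ht using MeasurableSpace.induction_on_inter h_eq h_inter with
  | empty => simp
  | basic t ht => exact basic t ht
  | compl t ht h_eq_t =>
    have h_total : ∫ x, f x ∂μ = ∫ x, g x ∂μ := by
      simpa only [Measure.restrict_univ] using basic _ h_univ
    rw [setIntegral_compl (hm t ht) hf, setIntegral_compl (hm t ht) hg, h_total, h_eq_t]
  | iUnion t h_disj ht h_eq_t =>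
    rw [integral_iUnion (fun i => hm _ (ht i)) h_disj hf.integrableOn,
      integral_iUnion (fun i => hm _ (ht i)) h_disj hg.integrableOn]
    exact tsum_congr h_eq_t

namespace ProbabilityTheory

theorem Indep.setIntegral_inter_mul {Ω : Type*} {m₁ m₂ mΩ : MeasurableSpace Ω}
    {μ : Measure Ω} (h_indep : Indep m₁ m₂ μ) (hm₁ : m₁ ≤ mΩ) (hm₂ : m₂ ≤ mΩ) {f g : Ω → ℝ}
    (hf : StronglyMeasurable[m₁] f) (hg : StronglyMeasurable[m₂] g) {A B : Set Ω}
    (hA : MeasurableSet[m₁] A) (hB : MeasurableSet[m₂] B) :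
    ∫ x in A ∩ B, f x * g x ∂μ = (∫ x in A, f x ∂μ) * ∫ x in B, g x ∂μ := by
  have hfA : Measurable[m₁] (A.indicator f) := hf.measurable.indicator hA
  have hgB : Measurable[m₂] (B.indicator g) := hg.measurable.indicator hB
  have h_indepFun : IndepFun (A.indicator f) (B.indicator g) μ := by
    rw [IndepFun_iff_Indep]
    exact indep_of_indep_of_le_right (indep_of_indep_of_le_left h_indep hfA.comap_le)
      hgB.comap_le
  rw [← integral_indicator ((hm₁ A hA).inter (hm₂ B hB)), ← integral_indicator (hm₁ A hA),
    ← integral_indicator (hm₂ B hB), ← h_indepFun.integral_mul_eq_mul_integral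
      (hfA.mono hm₁ le_rfl).aestronglyMeasurable (hgB.mono hm₂ le_rfl).aestronglyMeasurable]
  exact integral_congr_ae (Filter.Eventually.of_forall fun x => Set.inter_indicator_mul f g x)

end ProbabilityTheory

/-- Factorization behind equations (42) and (44) of the paper: if `𝒢` and `𝒯` are
independent sub-σ-algebras, `𝒢₀ ⊆ 𝒢`, `𝒯₀ ⊆ 𝒯`, `Y` is `𝒢`-measurable and integrable,
and `Z` is `𝒯`-measurable and bounded, then
`E[YZ | 𝒢₀ ⊔ 𝒯₀] = E[Y | 𝒢₀] ⋅ E[Z | 𝒯₀]` almost surely. -/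
theorem condexp_mul_indep_factorization
    {Ω : Type*} [F : MeasurableSpace Ω] (P : Measure Ω) [IsProbabilityMeasure P]
    (G T G₀ T₀ : MeasurableSpace Ω) (hG : G ≤ F) (hT : T ≤ F)
    (hindep : Indep G T P) (hG₀ : G₀ ≤ G) (hT₀ : T₀ ≤ T)
    (Y Z : Ω → ℝ)
    (hYmeas : StronglyMeasurable[G] Y) (hYint : Integrable Y P)
    (hZmeas : StronglyMeasurable[T] Z) (hZbdd : ∃ M : ℝ, ∀ ω, |Z ω| ≤ M) :
    P[fun ω => Y ω * Z ω | G₀ ⊔ T₀] =ᵐ[P] fun ω => (P[Y | G₀]) ω * (P[Z | T₀]) ω := by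
  obtain ⟨M, hM⟩ := hZbdd
  have hG₀F : G₀ ≤ F := hG₀.trans hG
  have hT₀F : T₀ ≤ F := hT₀.trans hT
  have hZ_bound : ∀ᵐ ω ∂P, |Z ω| ≤ M := Filter.Eventually.of_forall hM
  have hZint : Integrable Z P := .of_bound (hZmeas.mono hT).aestronglyMeasurable M hZ_bound
  have hYZint : Integrable (fun ω => Y ω * Z ω) P :=
    hYint.mul_bdd (hZmeas.mono hT).aestronglyMeasurable hZ_bound
  have hRHSint : Integrable (fun ω => (P[Y | G₀]) ω * (P[Z | T₀]) ω) P :=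
    integrable_condExp.mul_bdd (stronglyMeasurable_condExp.mono hT₀F).aestronglyMeasurable
      (ae_bdd_abs_condExp_of_ae_bdd_abs hZ_bound)
  have h_rect : ∀ A, MeasurableSet[G₀] A → ∀ B, MeasurableSet[T₀] B →
      ∫ ω in A ∩ B, (P[Y | G₀]) ω * (P[Z | T₀]) ω ∂P = ∫ ω in A ∩ B, Y ω * Z ω ∂P := by
    intro A hA B hB
    rw [hindep.setIntegral_inter_mul hG hT (stronglyMeasurable_condExp.mono hG₀)
        (stronglyMeasurable_condExp.mono hT₀) (hG₀ A hA) (hT₀ B hB),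
      hindep.setIntegral_inter_mul hG hT hYmeas hZmeas (hG₀ A hA) (hT₀ B hB),
      setIntegral_condExp hG₀F hYint hA, setIntegral_condExp hT₀F hZint hB]
  refine (ae_eq_condExp_of_forall_setIntegral_eq (sup_le hG₀F hT₀F) hYZint
    (fun s _ _ => hRHSint.integrableOn) (fun s hs _ => ?_)
    ((stronglyMeasurable_condExp.mono le_sup_left).mul
      (stronglyMeasurable_condExp.mono le_sup_right)).aestronglyMeasurable).symm
  refine setIntegral_eq_setIntegral_of_isPiSystem_of_univ_mem (sup_le hG₀F hT₀F)
    (MeasurableSpace.generateFrom_image2_inter_measurableSet G₀ T₀).symm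
    (G₀.isPiSystem_measurableSet.image2_inter T₀.isPiSystem_measurableSet)
    ⟨_, MeasurableSet.univ, _, MeasurableSet.univ, Set.univ_inter _⟩ hRHSint hYZint ?_ hs
  rintro _ ⟨A, hA, B, hB, rfl⟩
  exact h_rect A hA B hB
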